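/- arXiv:1107.5146 — 2 statements merged into one kernel-verified Lean document; each statement's English description precedes it below -/
import Mathlib

section
/- Canonical duality for the double-well problem: min_{x ∈ ℝ} P(x) = max_{ς > 0} P^d(ς), where P(x) = (1/2)((1/2)x² − 2)² − (1/2)x and P^d(ς) = −1/(8ς) − (1/2)ς² − 2ς; moreover both extrema are attained. -/
/-!
For `P = primal α β f` and `Pᵈ = dual α β f`, write `ε = x²/2 - β` and let
`Ξ(x, ς) = ς ε - ς²/(2α) - f x` be the total complementary function. Fenchel–Young for
`W(ε) = α ε²/2` gives `P x - Ξ(x, ς) = (α/2)(ε - ς/α)²`, and minimising the quadratic `Ξ(·, ς)`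
gives `Ξ(x, ς) - Pᵈ ς = (ς/2)(x - f/ς)²`. Hence `Pᵈ ς ≤ P x` whenever `ς > 0`, and both squares
vanish at `x = f/ς` when `ς` is a critical point of `Pᵈ`. For the double well
(`α = 1`, `β = 2`, `f = 1/2`) such a critical point `ς > 0` is a root of `8ς³ + 16ς² = 1`.
-/

namespace DoubleWell

noncomputable section

variable (α β f : ℝ)

def primal (x : ℝ) : ℝ := α / 2 * (x ^ 2 / 2 - β) ^ 2 - f * x

def dual (ς : ℝ) : ℝ := -f ^ 2 / (2 * ς) - ς ^ 2 / (2 * α) - β * ς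

variable {α β f}

theorem primal_sub_dual {x ς : ℝ} (hα : α ≠ 0) (hς : ς ≠ 0) :
    primal α β f x - dual α β f ς =
      α / 2 * (x ^ 2 / 2 - β - ς / α) ^ 2 + ς / 2 * (x - f / ς) ^ 2 := by
  unfold primal dual
  field_simp
  ring

theorem dual_le_primal {ς : ℝ} (hα : 0 < α) (hς : 0 < ς) (x : ℝ) :
    dual α β f ς ≤ primal α β f x := by
  rw [← sub_nonneg, primal_sub_dual hα.ne' hς.ne']
  positivity

theorem primal_eq_dual_of_critical {ς : ℝ} (hα : α ≠ 0) (hς : ς ≠ 0)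
    (hcrit : (f / ς) ^ 2 / 2 - β = ς / α) :
    primal α β f (f / ς) = dual α β f ς := by
  rw [← sub_eq_zero, primal_sub_dual hα hς, hcrit]
  ring

end

end DoubleWell

open DoubleWell

theorem exists_pos_root_dual_critical : ∃ ς : ℝ, 0 < ς ∧ 8 * ς ^ 3 + 16 * ς ^ 2 = 1 := by
  have hcont : ContinuousOn (fun ς : ℝ => 8 * ς ^ 3 + 16 * ς ^ 2) (Set.Icc (1 / 5) (1 / 4)) := by
    fun_prop
  obtain ⟨ς, hmem, hroot⟩ :=
    intermediate_value_Icc (by norm_num) hcont (show (1 : ℝ) ∈ Set.Icc _ _ by norm_num)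
  exact ⟨ς, by linarith [hmem.1], hroot⟩

theorem canonical_duality_double_well :
    ∃ xbar sbar : ℝ, 0 < sbar ∧
      (∀ x : ℝ, (1 / 2) * ((1 / 2) * xbar ^ 2 - 2) ^ 2 - (1 / 2) * xbar ≤
        (1 / 2) * ((1 / 2) * x ^ 2 - 2) ^ 2 - (1 / 2) * x) ∧
      (∀ ς : ℝ, 0 < ς →
        -1 / (8 * ς) - (1 / 2) * ς ^ 2 - 2 * ς ≤
          -1 / (8 * sbar) - (1 / 2) * sbar ^ 2 - 2 * sbar) ∧
      (1 / 2) * ((1 / 2) * xbar ^ 2 - 2) ^ 2 - (1 / 2) * xbar =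
        -1 / (8 * sbar) - (1 / 2) * sbar ^ 2 - 2 * sbar := by
  have hP (x : ℝ) : primal 1 2 (1 / 2) x = (1 / 2) * ((1 / 2) * x ^ 2 - 2) ^ 2 - (1 / 2) * x := by
    unfold primal; ring
  have hPd (ς : ℝ) : dual 1 2 (1 / 2) ς = -1 / (8 * ς) - (1 / 2) * ς ^ 2 - 2 * ς := by
    unfold dual; ring
  obtain ⟨s, hs, hroot⟩ := exists_pos_root_dual_critical
  have hcrit : (1 / 2 / s) ^ 2 / 2 - 2 = s / 1 := by
    field_simp
    linear_combination -hroot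
  have hgap := primal_eq_dual_of_critical (β := 2) one_ne_zero hs.ne' hcrit
  refine ⟨1 / 2 / s, s, hs, fun x => ?_, fun ς hς => ?_, ?_⟩
  · rw [← hP, ← hP, hgap]
    exact dual_le_primal one_pos hs x
  · rw [← hPd, ← hPd, ← hgap]
    exact dual_le_primal one_pos hς _
  · rw [← hP, ← hPd, hgap]
end

section
/- Complementarity identity (Gao-Strang): with P, Ξ, P^d as in the general quartic canonical dual framework, if ς̄ is a critical point of P^d with G(ς̄) invertible and x̄ = G(ς̄)⁻¹F(ς̄), then P(x̄) = Ξ(x̄, ς̄) = P^d(ς̄). -/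
/-!
For `G(ς)` invertible and symmetric and any `x`, completing the square gives
`Ξ(x, ς) = P^d(ς) + ½ rᵀ G(ς)⁻¹ r` with the residual `r = F(ς) - G(ς) x`, which is affine in `ς`.
For `x = x̄` the residual vanishes at `ς̄`, so `Ξ(x̄, ς̄) = P^d(ς̄)`, and the correction term,
quadratic in a vanishing affine quantity, has zero derivative at `ς̄`. Hence the gradient of `P^d`
at `ς̄` is that of `Ξ(x̄, ·)`, with components `ε_i(x̄) - ς̄_i / α_i`, where
`ε_i(x) = ½ xᵀA_i x + b_iᵀx + c_i`. Criticality gives `ς̄_i = α_i ε_i(x̄)`, and for this `ς̄` each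
term `(α_i/2) ε_i²` of `P` equals `ε_i ς̄_i - ς̄_i² / (2 α_i)`, i.e. `P(x̄) = Ξ(x̄, ς̄)`.
-/

open Matrix Topology

theorem Matrix.IsSymm.dotProduct_inv_mulVec_sub_mulVec {R n : Type*} [CommRing R] [Fintype n]
    [DecidableEq n] {M : Matrix n n R} (hM : M.IsSymm) (hdet : IsUnit M.det) (x v : n → R) :
    (v - M *ᵥ x) ⬝ᵥ M⁻¹ *ᵥ (v - M *ᵥ x) = v ⬝ᵥ M⁻¹ *ᵥ v - 2 * (x ⬝ᵥ v) + x ⬝ᵥ M *ᵥ x := by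
  have hcancel : M⁻¹ *ᵥ (M *ᵥ x) = x := by
    rw [mulVec_mulVec, nonsing_inv_mul _ hdet, one_mulVec]
  have hswap : (M *ᵥ x) ⬝ᵥ M⁻¹ *ᵥ v = x ⬝ᵥ v := by
    rw [dotProduct_mulVec, ← vecMul_transpose, hM.eq, vecMul_vecMul, mul_nonsing_inv _ hdet,
      vecMul_one]
  rw [mulVec_sub, hcancel, sub_dotProduct, dotProduct_sub, dotProduct_sub, hswap,
    dotProduct_comm v x, dotProduct_comm (M *ᵥ x) x]
  ring

section VanishingProduct

variable {𝕜 E : Type*} [NontriviallyNormedField 𝕜] [NormedAddCommGroup E] [NormedSpace 𝕜 E]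

theorem hasFDerivAt_mul_of_eq_zero {u v : E → 𝕜} {z : E} (hu : DifferentiableAt 𝕜 u z)
    (hu0 : u z = 0) (hv : ContinuousAt v z) (hv0 : v z = 0) :
    HasFDerivAt (fun y => u y * v y) (0 : E →L[𝕜] 𝕜) z := by
  have hO : (fun y => u y) =O[𝓝 z] fun y => y - z := by
    simpa [hu0] using hu.hasFDerivAt.isBigO_sub
  have ho : (fun y => v y) =o[𝓝 z] fun _ => (1 : ℝ) := by
    rw [Asymptotics.isLittleO_one_iff]
    simpa [hv0] using hv.tendsto
  have hprod := (hO.norm_right.mul_isLittleO ho).norm_right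
  simp only [mul_one, norm_norm, Asymptotics.isLittleO_norm_right] at hprod
  exact .of_isLittleO (by simpa [hu0] using hprod)

theorem hasFDerivAt_dotProduct_of_eq_zero {ι : Type*} [Fintype ι] {u v : E → ι → 𝕜} {z : E}
    (hu : DifferentiableAt 𝕜 u z) (hu0 : u z = 0) (hv : ContinuousAt v z) (hv0 : v z = 0) :
    HasFDerivAt (fun y => u y ⬝ᵥ v y) (0 : E →L[𝕜] 𝕜) z := by
  unfold dotProduct
  simpa using HasFDerivAt.fun_sum (u := Finset.univ) fun i _ =>
    hasFDerivAt_mul_of_eq_zero (differentiableAt_pi.1 hu i) (congrFun hu0 i)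
      (continuousAt_pi.1 hv i) (congrFun hv0 i)

end VanishingProduct

noncomputable section

namespace GaoStrang

variable {ι κ : Type*} [Fintype κ]
variable (A : κ → Matrix ι ι ℝ) (Q : Matrix ι ι ℝ) (b : κ → ι → ℝ) (f : ι → ℝ) (c α : κ → ℝ)

/- `primal`, `total`, `dual`, `load`, `hessian`, `strain` are `P`, `Ξ`, `P^d`, `F`, `G`, `ε`. -/

def load (ς : κ → ℝ) : ι → ℝ := f - ∑ i, ς i • b i

def hessian (ς : κ → ℝ) : Matrix ι ι ℝ := Q + ∑ i, ς i • A i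

variable {A Q} in
theorem isSymm_hessian (hA : ∀ i, (A i).IsSymm) (hQ : Q.IsSymm) (ς : κ → ℝ) :
    (hessian A Q ς).IsSymm :=
  hQ.add <| Finset.sum_induction _ IsSymm (fun _ _ => .add) isSymm_zero fun i _ => (hA i).smul _

theorem continuous_hessian : Continuous (hessian A Q) := by
  unfold hessian
  fun_prop

variable [Fintype ι]

def strain (x : ι → ℝ) (i : κ) : ℝ := (1 / 2) * (x ⬝ᵥ A i *ᵥ x) + b i ⬝ᵥ x + c i

def primal (x : ι → ℝ) : ℝ :=
  (∑ i, (α i / 2) * strain A b c x i ^ 2) + (1 / 2) * (x ⬝ᵥ Q *ᵥ x) - x ⬝ᵥ f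

def total (x : ι → ℝ) (ς : κ → ℝ) : ℝ :=
  (∑ i, (strain A b c x i * ς i - ς i ^ 2 / (2 * α i))) + (1 / 2) * (x ⬝ᵥ Q *ᵥ x) - x ⬝ᵥ f

def residual (x : ι → ℝ) (ς : κ → ℝ) : ι → ℝ := load b f ς - hessian A Q ς *ᵥ x

def dual [DecidableEq ι] (ς : κ → ℝ) : ℝ :=
  (∑ i, (c i * ς i - ς i ^ 2 / (2 * α i)))
    - (1 / 2) * (load b f ς ⬝ᵥ (hessian A Q ς)⁻¹ *ᵥ load b f ς)

def totalGrad (x : ι → ℝ) (ς : κ → ℝ) : (κ → ℝ) →L[ℝ] ℝ :=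
  ∑ i, (strain A b c x i - ς i / α i) • ContinuousLinearMap.proj (R := ℝ) (φ := fun _ => ℝ) i

variable {A Q b f c α}

theorem totalGrad_single [DecidableEq κ] (x : ι → ℝ) (ς : κ → ℝ) (i : κ) :
    totalGrad A b c α x ς (Pi.single i 1) = strain A b c x i - ς i / α i := by
  simp [totalGrad, Pi.single_apply]

theorem differentiable_residual (x : ι → ℝ) : Differentiable ℝ (residual A Q b f x) := by
  have h : residual A Q b f x = fun ς => f - Q *ᵥ x - ∑ i, ς i • (b i + A i *ᵥ x) := by
    ext ς : 1
    simp only [residual, load, hessian, add_mulVec, sum_mulVec, smul_mulVec, smul_add,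
      Finset.sum_add_distrib]
    abel
  rw [h]
  fun_prop

theorem total_eq (x : ι → ℝ) (ς : κ → ℝ) :
    total A Q b f c α x ς = (∑ i, (c i * ς i - ς i ^ 2 / (2 * α i)))
      + (1 / 2) * (x ⬝ᵥ hessian A Q ς *ᵥ x) - x ⬝ᵥ load b f ς := by
  have hsum : ∑ i, (strain A b c x i * ς i - ς i ^ 2 / (2 * α i))
      = ∑ i, (c i * ς i - ς i ^ 2 / (2 * α i)) + (1 / 2) * ∑ i, ς i * (x ⬝ᵥ A i *ᵥ x)
        + ∑ i, ς i * (x ⬝ᵥ b i) := by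
    rw [Finset.mul_sum, ← Finset.sum_add_distrib, ← Finset.sum_add_distrib]
    refine Finset.sum_congr rfl fun i _ => ?_
    rw [strain, dotProduct_comm (b i)]
    ring
  simp only [total, hsum, hessian, load, add_mulVec, sum_mulVec, smul_mulVec, dotProduct_add,
    dotProduct_sub, dotProduct_sum, dotProduct_smul, smul_eq_mul]
  ring

theorem hasFDerivAt_total (x : ι → ℝ) (ς : κ → ℝ) :
    HasFDerivAt (total A Q b f c α x) (totalGrad A b c α x ς) ς := by
  have hterm : ∀ i, HasDerivAt (fun s => strain A b c x i * s - s ^ 2 / (2 * α i))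
      (strain A b c x i - ς i / α i) (ς i) := by
    intro i
    refine (((hasDerivAt_id (ς i)).const_mul _).sub
      ((hasDerivAt_pow 2 (ς i)).div_const (2 * α i))).congr_deriv ?_
    norm_num
    ring
  have hsum : HasFDerivAt (fun ς' => ∑ i, (strain A b c x i * ς' i - ς' i ^ 2 / (2 * α i)))
      (totalGrad A b c α x ς) ς :=
    HasFDerivAt.fun_sum fun i _ =>
      (hterm i).comp_hasFDerivAt (f := fun ς' : κ → ℝ => ς' i) ς (hasFDerivAt_apply i ς)
  exact (hsum.add_const _).sub_const _

theorem primal_eq_total_of_eq_mul_strain (hα : ∀ i, α i ≠ 0) {x : ι → ℝ} {ς : κ → ℝ}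
    (hς : ∀ i, ς i = α i * strain A b c x i) :
    primal A Q b f c α x = total A Q b f c α x ς := by
  simp only [primal, total, hς]
  congr 2
  refine Finset.sum_congr rfl fun i _ => ?_
  field_simp [hα i]
  ring

variable [DecidableEq ι]

theorem total_eq_dual_add (hA : ∀ i, (A i).IsSymm) (hQ : Q.IsSymm) {ς : κ → ℝ}
    (hdet : IsUnit (hessian A Q ς).det) (x : ι → ℝ) :
    total A Q b f c α x ς = dual A Q b f c α ς
      + (1 / 2) * (residual A Q b f x ς ⬝ᵥ (hessian A Q ς)⁻¹ *ᵥ residual A Q b f x ς) := by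
  rw [total_eq, dual, residual, (isSymm_hessian hA hQ ς).dotProduct_inv_mulVec_sub_mulVec hdet]
  ring

theorem residual_inv_mulVec_load {ς : κ → ℝ} (hdet : IsUnit (hessian A Q ς).det) :
    residual A Q b f ((hessian A Q ς)⁻¹ *ᵥ load b f ς) ς = 0 := by
  rw [residual, mulVec_mulVec, mul_nonsing_inv _ hdet, one_mulVec, sub_self]

theorem total_inv_mulVec_load (hA : ∀ i, (A i).IsSymm) (hQ : Q.IsSymm) {ς : κ → ℝ}
    (hdet : IsUnit (hessian A Q ς).det) :
    total A Q b f c α ((hessian A Q ς)⁻¹ *ᵥ load b f ς) ς = dual A Q b f c α ς := by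
  simp [total_eq_dual_add hA hQ hdet, residual_inv_mulVec_load hdet]

theorem hasFDerivAt_dual (hA : ∀ i, (A i).IsSymm) (hQ : Q.IsSymm) {ς : κ → ℝ}
    (hdet : IsUnit (hessian A Q ς).det) :
    HasFDerivAt (dual A Q b f c α) (totalGrad A b c α ((hessian A Q ς)⁻¹ *ᵥ load b f ς) ς) ς := by
  set x := (hessian A Q ς)⁻¹ *ᵥ load b f ς
  have hres : residual A Q b f x ς = 0 := residual_inv_mulVec_load hdet
  have hinv : ContinuousAt (fun ς' => (hessian A Q ς')⁻¹) ς :=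
    (continuousAt_matrix_inv _ (by
      simpa [hdet.unit_spec] using NormedRing.inverse_continuousAt hdet.unit)).comp
      (continuous_hessian A Q).continuousAt
  have hgap : HasFDerivAt
      (fun ς' => residual A Q b f x ς' ⬝ᵥ (hessian A Q ς')⁻¹ *ᵥ residual A Q b f x ς') 0 ς :=
    hasFDerivAt_dotProduct_of_eq_zero (differentiable_residual x ς) hres
      ((continuous_fst.matrix_mulVec continuous_snd).continuousAt.comp
        (hinv.prodMk (differentiable_residual x).continuous.continuousAt))
      (by rw [hres, mulVec_zero])
  have hnear : ∀ᶠ ς' in 𝓝 ς, IsUnit (hessian A Q ς').det :=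
    ((continuous_hessian A Q).matrix_det.continuousAt.eventually_ne hdet.ne_zero).mono
      fun _ h => h.isUnit
  have hdiff := (hasFDerivAt_total (A := A) (Q := Q) (b := b) (f := f) (c := c) (α := α) x ς).sub
    (hgap.const_mul (1 / 2))
  rw [smul_zero, sub_zero] at hdiff
  exact hdiff.congr_of_eventuallyEq <| hnear.mono fun ς' h => by
    simp [total_eq_dual_add hA hQ h x]

theorem eq_mul_strain_of_fderiv_dual_eq_zero (hA : ∀ i, (A i).IsSymm) (hQ : Q.IsSymm)
    (hα : ∀ i, α i ≠ 0) {ς : κ → ℝ} (hdet : IsUnit (hessian A Q ς).det)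
    (hcrit : fderiv ℝ (dual A Q b f c α) ς = 0) (i : κ) :
    ς i = α i * strain A b c ((hessian A Q ς)⁻¹ *ᵥ load b f ς) i := by
  classical
  have h := DFunLike.congr_fun ((hasFDerivAt_dual hA hQ hdet).fderiv.symm.trans hcrit)
    (Pi.single i 1)
  rw [totalGrad_single, _root_.zero_apply, sub_eq_zero] at h
  rw [h, mul_div_cancel₀ _ (hα i)]

end GaoStrang

end

theorem gao_strang_complementarity_general
    (n m : ℕ)
    (A : Fin m → Matrix (Fin n) (Fin n) ℝ) (Q : Matrix (Fin n) (Fin n) ℝ)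
    (b : Fin m → Fin n → ℝ) (f : Fin n → ℝ) (c : Fin m → ℝ) (α : Fin m → ℝ)
    (hA : ∀ i, (A i).IsSymm) (hQ : Q.IsSymm) (hα : ∀ i, 0 < α i)
    -- primal, complementary and dual functions
    (P : (Fin n → ℝ) → ℝ)
    (hP : P = fun x => (∑ i, (α i / 2) * ((1 / 2) * (x ⬝ᵥ A i *ᵥ x) + b i ⬝ᵥ x + c i) ^ 2)
        + (1 / 2) * (x ⬝ᵥ Q *ᵥ x) - x ⬝ᵥ f)
    (Ξ : (Fin n → ℝ) → (Fin m → ℝ) → ℝ)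
    (hΞ : Ξ = fun x ς => (∑ i, (((1 / 2) * (x ⬝ᵥ A i *ᵥ x) + b i ⬝ᵥ x + c i) * ς i
        - ς i ^ 2 / (2 * α i))) + (1 / 2) * (x ⬝ᵥ Q *ᵥ x) - x ⬝ᵥ f)
    (F : (Fin m → ℝ) → Fin n → ℝ) (hF : F = fun ς => f - ∑ i, ς i • b i)
    (G : (Fin m → ℝ) → Matrix (Fin n) (Fin n) ℝ) (hG : G = fun ς => Q + ∑ i, ς i • A i)
    (Pd : (Fin m → ℝ) → ℝ)
    (hPd : Pd = fun ς => (∑ i, (c i * ς i - ς i ^ 2 / (2 * α i)))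
        - (1 / 2) * (F ς ⬝ᵥ (G ς)⁻¹ *ᵥ F ς))
    (ςbar : Fin m → ℝ) (hinv : IsUnit (G ςbar).det)
    (hcrit : fderiv ℝ Pd ςbar = 0)
    (xbar : Fin n → ℝ) (hxbar : xbar = (G ςbar)⁻¹ *ᵥ F ςbar) :
    P xbar = Ξ xbar ςbar ∧ Ξ xbar ςbar = Pd ςbar := by
  subst hP hΞ hPd hF hG hxbar
  have hα₀ : ∀ i, α i ≠ 0 := fun i => (hα i).ne'
  exact ⟨GaoStrang.primal_eq_total_of_eq_mul_strain hα₀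
      (GaoStrang.eq_mul_strain_of_fderiv_dual_eq_zero hA hQ hα₀ hinv hcrit),
    GaoStrang.total_inv_mulVec_load hA hQ hinv⟩

theorem gao_strang_complementarity
    (n m : ℕ) (hn : 0 < n) (hm : 0 < m)
    (A : Fin m → Matrix (Fin n) (Fin n) ℝ) (Q : Matrix (Fin n) (Fin n) ℝ)
    (b : Fin m → Fin n → ℝ) (f : Fin n → ℝ) (c : Fin m → ℝ) (α : Fin m → ℝ)
    (hA : ∀ i, (A i).IsSymm) (hQ : Q.IsSymm) (hα : ∀ i, 0 < α i)
    -- primal, complementary and dual functions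
    (P : (Fin n → ℝ) → ℝ)
    (hP : P = fun x => (∑ i, (α i / 2) * ((1 / 2) * (x ⬝ᵥ A i *ᵥ x) + b i ⬝ᵥ x + c i) ^ 2)
        + (1 / 2) * (x ⬝ᵥ Q *ᵥ x) - x ⬝ᵥ f)
    (Ξ : (Fin n → ℝ) → (Fin m → ℝ) → ℝ)
    (hΞ : Ξ = fun x ς => (∑ i, (((1 / 2) * (x ⬝ᵥ A i *ᵥ x) + b i ⬝ᵥ x + c i) * ς i
        - ς i ^ 2 / (2 * α i))) + (1 / 2) * (x ⬝ᵥ Q *ᵥ x) - x ⬝ᵥ f)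
    (F : (Fin m → ℝ) → Fin n → ℝ) (hF : F = fun ς => f - ∑ i, ς i • b i)
    (G : (Fin m → ℝ) → Matrix (Fin n) (Fin n) ℝ) (hG : G = fun ς => Q + ∑ i, ς i • A i)
    (Pd : (Fin m → ℝ) → ℝ)
    (hPd : Pd = fun ς => (∑ i, (c i * ς i - ς i ^ 2 / (2 * α i)))
        - (1 / 2) * (F ς ⬝ᵥ (G ς)⁻¹ *ᵥ F ς))
    (ςbar : Fin m → ℝ) (hinv : IsUnit (G ςbar).det)
    (hcrit : fderiv ℝ Pd ςbar = 0)
    (xbar : Fin n → ℝ) (hxbar : xbar = (G ςbar)⁻¹ *ᵥ F ςbar) :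
    P xbar = Ξ xbar ςbar ∧ Ξ xbar ςbar = Pd ςbar :=
  gao_strang_complementarity_general n m A Q b f c α hA hQ hα P hP Ξ hΞ F hF G hG Pd hPd ςbar hinv
    hcrit xbar hxbar
end
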